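/- Let |φ_0000⟩ ∈ ℂ^16 be the 4-qubit linear cluster state and |φ_0101⟩ = Z₂Z₄|φ_0000⟩. Then the eigenspace {ψ ∈ ℂ^16 : B₂^φ ψ = 4ψ} of the Bell operator B₂^φ = ZXIX + YYIX + YXXY − ZYXY for its algebraically maximal eigenvalue 4 is exactly the two-dimensional span of |φ_0000⟩ and |φ_0101⟩; in particular every superposition α|φ_0000⟩ + β|φ_0101⟩ attains ⟨B₂^φ⟩ = 4. -/

import Mathlib

open Matrix

/-- Pauli X matrix on a single qubit (basis indexed by `Bool`). -/
noncomputable def pX : Matrix Bool Bool ℂ := Matrix.of fun b c => if b = c then 0 else 1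

/-- Pauli Y matrix on a single qubit. -/
noncomputable def pY : Matrix Bool Bool ℂ :=
  Matrix.of fun b c => if b = c then 0 else if b then Complex.I else -Complex.I

/-- Pauli Z matrix on a single qubit. -/
noncomputable def pZ : Matrix Bool Bool ℂ :=
  Matrix.of fun b c => if b = c then (if b then -1 else 1) else 0

/-- Tensor product of single-qubit matrices, as an operator on the `n`-qubit space
`(Fin n → Bool) → ℂ ≅ ℂ^(2^n)`. -/
noncomputable def tensorOp {n : ℕ} (M : Fin n → Matrix Bool Bool ℂ) :
    Matrix (Fin n → Bool) (Fin n → Bool) ℂ :=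
  Matrix.of fun f g => ∏ i, M i (f i) (g i)

/-- The 4-qubit linear cluster state `|φ_0000⟩` (graph state of the path `1–2–3–4`):
amplitude `(1/4)·(−1)^(f(1)f(2)+f(2)f(3)+f(3)f(4))` at `|f⟩`. -/
noncomputable def cluster4 : (Fin 4 → Bool) → ℂ := fun f =>
  (1 / 4 : ℂ) * (if f 0 && f 1 then -1 else 1) * (if f 1 && f 2 then -1 else 1)
    * (if f 2 && f 3 then -1 else 1)

/-- `|φ_0101⟩ = Z₂Z₄|φ_0000⟩`. -/
noncomputable def cluster4_0101 : (Fin 4 → Bool) → ℂ :=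
  Matrix.mulVec (tensorOp ![1, pZ, 1, pZ]) cluster4

/-- The Bell operator `B₂^φ = ZXIX + YYIX + YXXY − ZYXY`. -/
noncomputable def bellB2 : Matrix (Fin 4 → Bool) (Fin 4 → Bool) ℂ :=
  tensorOp ![pZ, pX, 1, pX] + tensorOp ![pY, pY, 1, pX]
    + tensorOp ![pY, pX, pX, pY] - tensorOp ![pZ, pY, pX, pY]

/-!
Each of the four Pauli strings `T_k` with `B₂^φ = ∑ T_k` (the sign of `−ZYXY` absorbed into its
`Z` factor) is a Hermitian involution, so `⟨ψ, (4 − B₂^φ) ψ⟩ = ½ ∑ ‖(1 − T_k) ψ‖²`: the eigenvalue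
`4` is attained exactly on the common fixed space of the `T_k`. Both cluster states lie in it.
Conversely, `T_k` maps `|f⟩` to a multiple of `|f ⊕ x_k⟩`, where `x_k` marks the `X`/`Y` factors,
and the flips `x_k` connect every basis state to `|0000⟩` or `|0001⟩`. So a common fixed vector
vanishing at these two basis states is zero, and the fixed space is spanned by `|φ_0000⟩` and
`|φ_0101⟩`, which take the linearly independent values `(1/4, 1/4)` and `(1/4, −1/4)` there.
-/

open scoped ComplexOrder

section Involution

variable {𝕜 n ι : Type*} [RCLike 𝕜] [Fintype n] [DecidableEq n] [Fintype ι]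

theorem Matrix.IsHermitian.star_dotProduct_sub_mulVec {T : Matrix n n 𝕜} (hT : T.IsHermitian)
    (hT2 : T * T = 1) (ψ : n → 𝕜) :
    star (ψ - T *ᵥ ψ) ⬝ᵥ (ψ - T *ᵥ ψ) = 2 * (star ψ ⬝ᵥ (ψ - T *ᵥ ψ)) := by
  have hsq : (1 - T)ᴴ * (1 - T) = (2 : 𝕜) • (1 - T) := by
    rw [conjTranspose_sub, conjTranspose_one, hT.eq, sub_mul, one_mul, mul_sub, mul_one, hT2,
      two_smul]
    abel
  have hu : ψ - T *ᵥ ψ = (1 - T) *ᵥ ψ := by rw [sub_mulVec, one_mulVec]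
  rw [hu, star_mulVec, ← dotProduct_mulVec, mulVec_mulVec, hsq, smul_mulVec, dotProduct_smul,
    smul_eq_mul]

theorem Matrix.sum_mulVec_eq_card_smul_iff {T : ι → Matrix n n 𝕜} (hT : ∀ i, (T i).IsHermitian)
    (hT2 : ∀ i, T i * T i = 1) (ψ : n → 𝕜) :
    (∑ i, T i) *ᵥ ψ = (Fintype.card ι : 𝕜) • ψ ↔ ∀ i, T i *ᵥ ψ = ψ := by
  refine ⟨fun h i => ?_, fun h => ?_⟩
  · have hsum : ∑ i, (ψ - T i *ᵥ ψ) = 0 := by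
      rw [Finset.sum_sub_distrib, ← sum_mulVec, h, Finset.sum_const, Finset.card_univ,
        Nat.cast_smul_eq_nsmul, sub_self]
    have hnorm : ∑ i, star (ψ - T i *ᵥ ψ) ⬝ᵥ (ψ - T i *ᵥ ψ) = 0 := by
      simp_rw [(hT _).star_dotProduct_sub_mulVec (hT2 _), ← Finset.mul_sum, ← dotProduct_sum,
        hsum, dotProduct_zero, mul_zero]
    rw [Finset.sum_eq_zero_iff_of_nonneg fun j _ => dotProduct_star_self_nonneg _] at hnorm
    exact (sub_eq_zero.mp (dotProduct_star_self_eq_zero.mp (hnorm i (Finset.mem_univ i)))).symm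
  · rw [sum_mulVec, Finset.sum_congr rfl fun i _ => h i, Finset.sum_const, Finset.card_univ,
      Nat.cast_smul_eq_nsmul]

end Involution

section TensorOp

variable {n : ℕ}

theorem tensorOp_mul_tensorOp (M N : Fin n → Matrix Bool Bool ℂ) :
    tensorOp M * tensorOp N = tensorOp (M * N) := by
  ext f h
  simp only [tensorOp, mul_apply, of_apply, Pi.mul_apply, ← Finset.prod_mul_distrib]
  exact (Fintype.prod_sum fun i b => M i (f i) b * N i b (h i)).symm

theorem tensorOp_one : tensorOp (1 : Fin n → Matrix Bool Bool ℂ) = 1 := by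
  ext f g
  by_cases hfg : f = g
  · subst hfg
    simp [tensorOp]
  · obtain ⟨i, hi⟩ := Function.ne_iff.mp hfg
    simp only [tensorOp, of_apply, Pi.one_apply, one_apply_ne hfg]
    exact Finset.prod_eq_zero (Finset.mem_univ i) (one_apply_ne hi)

theorem isHermitian_tensorOp {M : Fin n → Matrix Bool Bool ℂ} (hM : ∀ i, (M i).IsHermitian) :
    (tensorOp M).IsHermitian := by
  ext f g
  simp only [conjTranspose_apply, tensorOp, of_apply, star_prod]
  exact Finset.prod_congr rfl fun i _ => (hM i).apply (f i) (g i)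

theorem tensorOp_mul_self {M : Fin n → Matrix Bool Bool ℂ} (hM : ∀ i, M i * M i = 1) :
    tensorOp M * tensorOp M = 1 := by
  rw [tensorOp_mul_tensorOp, show M * M = 1 from funext hM, tensorOp_one]

theorem tensorOp_mulVec_apply {M : Fin n → Matrix Bool Bool ℂ} {x : Fin n → Bool}
    (hM : ∀ i b c, c ≠ xor b (x i) → M i b c = 0) (ψ : (Fin n → Bool) → ℂ) (f : Fin n → Bool) :
    (tensorOp M *ᵥ ψ) f =
      tensorOp M f (fun i => xor (f i) (x i)) * ψ (fun i => xor (f i) (x i)) := by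
  refine Fintype.sum_eq_single _ fun g hg => ?_
  obtain ⟨i, hi⟩ := Function.ne_iff.mp hg
  simp only [tensorOp, of_apply]
  rw [Finset.prod_eq_zero (Finset.mem_univ i) (hM i _ _ hi), zero_mul]

theorem apply_xor_eq_zero_of_tensorOp_mulVec_eq_self {M : Fin n → Matrix Bool Bool ℂ}
    {x : Fin n → Bool} (hM : ∀ i b c, c ≠ xor b (x i) → M i b c = 0)
    {ψ : (Fin n → Bool) → ℂ} (hψ : tensorOp M *ᵥ ψ = ψ) {f : Fin n → Bool} (hf : ψ f = 0) :
    ψ (fun i => xor (f i) (x i)) = 0 := by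
  rw [← hψ, tensorOp_mulVec_apply hM]
  simp [hf]

theorem tensorOp_vecCons_neg (A : Matrix Bool Bool ℂ) (M : Fin n → Matrix Bool Bool ℂ) :
    tensorOp (vecCons (-A) M) = -tensorOp (vecCons A M) := by
  ext f g
  simp [tensorOp, Fin.prod_univ_succ]

end TensorOp

theorem forall_fin_four_bool {P : (Fin 4 → Bool) → Prop} :
    (∀ f, P f) ↔ ∀ a b c d, P ![a, b, c, d] := by
  refine ⟨fun h _ _ _ _ => h _, fun h f => ?_⟩
  have hf : f = ![f 0, f 1, f 2, f 3] := by
    ext i; fin_cases i <;> rfl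
  rw [hf]
  exact h _ _ _ _

theorem pX_isHermitian : pX.IsHermitian := by
  ext b c; cases b <;> cases c <;> simp [pX]

theorem pY_isHermitian : pY.IsHermitian := by
  ext b c; cases b <;> cases c <;> simp [pY]

theorem pZ_isHermitian : pZ.IsHermitian := by
  ext b c; cases b <;> cases c <;> simp [pZ]

theorem pX_mul_self : pX * pX = 1 := by
  ext b c; cases b <;> cases c <;> simp [pX, mul_apply]

theorem pY_mul_self : pY * pY = 1 := by
  ext b c; cases b <;> cases c <;> simp [pY, mul_apply]

theorem pZ_mul_self : pZ * pZ = 1 := by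
  ext b c; cases b <;> cases c <;> simp [pZ, mul_apply]

theorem pX_apply_eq_zero {b c : Bool} (h : c ≠ xor b true) : pX b c = 0 := by
  cases b <;> cases c <;> simp_all [pX]

theorem pY_apply_eq_zero {b c : Bool} (h : c ≠ xor b true) : pY b c = 0 := by
  cases b <;> cases c <;> simp_all [pY]

theorem pZ_apply_eq_zero {b c : Bool} (h : c ≠ xor b false) : pZ b c = 0 := by
  cases b <;> cases c <;> simp_all [pZ]

theorem one_apply_eq_zero {b c : Bool} (h : c ≠ xor b false) :
    (1 : Matrix Bool Bool ℂ) b c = 0 :=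
  one_apply_ne (by simpa [eq_comm] using h)

noncomputable def bellB2Paulis : Fin 4 → Fin 4 → Matrix Bool Bool ℂ :=
  ![![pZ, pX, 1, pX], ![pY, pY, 1, pX], ![pY, pX, pX, pY], ![-pZ, pY, pX, pY]]

def bellB2Flips : Fin 4 → Fin 4 → Bool :=
  ![![false, true, false, true], ![true, true, false, true], ![true, true, true, true],
    ![false, true, true, true]]

theorem bellB2Paulis_apply_eq_zero (k i : Fin 4) (b c : Bool) (h : c ≠ xor b (bellB2Flips k i)) :
    bellB2Paulis k i b c = 0 := by
  fin_cases k <;> fin_cases i <;>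
    simp only [bellB2Paulis, bellB2Flips, Fin.zero_eta, Fin.mk_one, Fin.reduceFinMk, cons_val]
      at h ⊢ <;>
    first
      | exact pX_apply_eq_zero h | exact pY_apply_eq_zero h | exact pZ_apply_eq_zero h
      | exact one_apply_eq_zero h | exact neg_eq_zero.mpr (pZ_apply_eq_zero h)

theorem bellB2_eq_sum : bellB2 = ∑ k, tensorOp (bellB2Paulis k) := by
  rw [Fin.sum_univ_four, bellB2, sub_eq_add_neg, ← tensorOp_vecCons_neg]
  rfl

theorem bellB2Paulis_isHermitian (k i : Fin 4) : (bellB2Paulis k i).IsHermitian := by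
  fin_cases k <;> fin_cases i <;>
    simp [bellB2Paulis, pX_isHermitian, pY_isHermitian, pZ_isHermitian, pZ_isHermitian.neg]

theorem bellB2Paulis_mul_self (k i : Fin 4) : bellB2Paulis k i * bellB2Paulis k i = 1 := by
  fin_cases k <;> fin_cases i <;> simp [bellB2Paulis, pX_mul_self, pY_mul_self, pZ_mul_self]

theorem cluster4_0101_apply (f : Fin 4 → Bool) :
    cluster4_0101 f = tensorOp ![1, pZ, 1, pZ] f f * cluster4 f := by
  have hZ : ∀ i b c, c ≠ xor b false →
      (![1, pZ, 1, pZ] : Fin 4 → Matrix Bool Bool ℂ) i b c = 0 := by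
    intro i b c h
    fin_cases i
    exacts [one_apply_eq_zero h, pZ_apply_eq_zero h, one_apply_eq_zero h, pZ_apply_eq_zero h]
  rw [cluster4_0101, tensorOp_mulVec_apply hZ]
  simp

theorem cluster4_apply_false_false_false (d : Bool) :
    cluster4 ![false, false, false, d] = 1 / 4 := by
  simp [cluster4]

theorem cluster4_0101_apply_false_false_false (d : Bool) :
    cluster4_0101 ![false, false, false, d] = if d then -1 / 4 else 1 / 4 := by
  rw [cluster4_0101_apply, cluster4_apply_false_false_false]
  simp only [tensorOp, of_apply, Fin.prod_univ_four, cons_val]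
  cases d <;> norm_num [pZ]

theorem bellB2Paulis_mulVec_cluster4 (k : Fin 4) :
    tensorOp (bellB2Paulis k) *ᵥ cluster4 = cluster4 := by
  funext f
  rw [tensorOp_mulVec_apply (bellB2Paulis_apply_eq_zero k)]
  revert f
  rw [forall_fin_four_bool]
  intro a b c d
  fin_cases k <;>
    simp only [tensorOp, of_apply, Fin.prod_univ_four, bellB2Paulis, bellB2Flips, cluster4,
      Fin.reduceFinMk, Fin.zero_eta, Fin.mk_one, cons_val] <;>
    cases a <;> cases b <;> cases c <;> cases d <;> simp [pX, pY, pZ, one_apply]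

theorem bellB2Paulis_mulVec_cluster4_0101 (k : Fin 4) :
    tensorOp (bellB2Paulis k) *ᵥ cluster4_0101 = cluster4_0101 := by
  funext f
  rw [tensorOp_mulVec_apply (bellB2Paulis_apply_eq_zero k)]
  revert f
  rw [forall_fin_four_bool]
  intro a b c d
  fin_cases k <;>
    simp only [cluster4_0101_apply, tensorOp, of_apply, Fin.prod_univ_four, bellB2Paulis,
      bellB2Flips, cluster4, Fin.reduceFinMk, Fin.zero_eta, Fin.mk_one, cons_val] <;>
    cases a <;> cases b <;> cases c <;> cases d <;> simp [pX, pY, pZ, one_apply]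

theorem eq_zero_of_forall_bellB2Paulis_mulVec_eq_self {ψ : (Fin 4 → Bool) → ℂ}
    (hψ : ∀ k, tensorOp (bellB2Paulis k) *ᵥ ψ = ψ) (h0 : ψ ![false, false, false, false] = 0)
    (h1 : ψ ![false, false, false, true] = 0) : ψ = 0 := by
  have hflip : ∀ k a b c d, ψ ![a, b, c, d] = 0 →
      ψ ![xor a (bellB2Flips k 0), xor b (bellB2Flips k 1), xor c (bellB2Flips k 2),
        xor d (bellB2Flips k 3)] = 0 := by
    intro k a b c d h
    convert apply_xor_eq_zero_of_tensorOp_mulVec_eq_self (bellB2Paulis_apply_eq_zero k) (hψ k) h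
      using 2
    ext i; fin_cases i <;> rfl
  have flip_a : ∀ a b c d, ψ ![a, b, c, d] = 0 → ψ ![!a, b, c, d] = 0 := fun a b c d h => by
    simpa [bellB2Flips] using hflip 1 _ _ _ _ (hflip 0 _ _ _ _ h)
  have flip_c : ∀ a b c d, ψ ![a, b, c, d] = 0 → ψ ![a, b, !c, d] = 0 := fun a b c d h => by
    simpa [bellB2Flips] using hflip 3 _ _ _ _ (hflip 0 _ _ _ _ h)
  have flip_bd : ∀ a b c d, ψ ![a, b, c, d] = 0 → ψ ![a, !b, c, !d] = 0 := fun a b c d h => by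
    simpa [bellB2Flips] using hflip 0 _ _ _ _ h
  have hbd : ∀ b d, ψ ![false, b, false, d] = 0 := by
    rintro (_ | _) (_ | _)
    exacts [h0, h1, flip_bd _ _ _ _ h1, flip_bd _ _ _ _ h0]
  have hbcd : ∀ b c d, ψ ![false, b, c, d] = 0 := by
    rintro b (_ | _) d
    exacts [hbd b d, flip_c _ _ _ _ (hbd b d)]
  refine funext (forall_fin_four_bool.mpr ?_)
  rintro (_ | _) b c d
  exacts [hbcd b c d, flip_a _ _ _ _ (hbcd b c d)]

theorem mem_eigenspace_bellB2_iff (ψ : (Fin 4 → Bool) → ℂ) :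
    ψ ∈ Module.End.eigenspace (mulVecLin bellB2) 4 ↔
      ∀ k, tensorOp (bellB2Paulis k) *ᵥ ψ = ψ := by
  rw [Module.End.mem_eigenspace_iff, mulVecLin_apply, bellB2_eq_sum,
    ← sum_mulVec_eq_card_smul_iff (fun k => isHermitian_tensorOp (bellB2Paulis_isHermitian k))
      (fun k => tensorOp_mul_self (bellB2Paulis_mul_self k)), Fintype.card_fin, Nat.cast_ofNat]

theorem mem_span_cluster4_iff (ψ : (Fin 4 → Bool) → ℂ) :
    ψ ∈ Submodule.span ℂ {cluster4, cluster4_0101} ↔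
      ∀ k, tensorOp (bellB2Paulis k) *ᵥ ψ = ψ := by
  refine ⟨fun h k => ?_, fun h => ?_⟩
  · obtain ⟨a, b, rfl⟩ := Submodule.mem_span_pair.mp h
    rw [mulVec_add, mulVec_smul, mulVec_smul, bellB2Paulis_mulVec_cluster4,
      bellB2Paulis_mulVec_cluster4_0101]
  · set a := 2 * (ψ ![false, false, false, false] + ψ ![false, false, false, true])
    set b := 2 * (ψ ![false, false, false, false] - ψ ![false, false, false, true])
    have hzero : ψ - (a • cluster4 + b • cluster4_0101) = 0 := by
      refine eq_zero_of_forall_bellB2Paulis_mulVec_eq_self (fun k => ?_) ?_ ?_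
      · rw [mulVec_sub, mulVec_add, mulVec_smul, mulVec_smul, bellB2Paulis_mulVec_cluster4,
          bellB2Paulis_mulVec_cluster4_0101, h]
      all_goals
        simp only [Pi.sub_apply, Pi.add_apply, Pi.smul_apply, smul_eq_mul,
          cluster4_apply_false_false_false, cluster4_0101_apply_false_false_false, a, b]
        norm_num
        ring
    exact Submodule.mem_span_pair.mpr ⟨a, b, (sub_eq_zero.mp hzero).symm⟩

theorem linearIndependent_cluster4 : LinearIndependent ℂ ![cluster4, cluster4_0101] := by
  refine LinearIndependent.pair_iff.mpr fun s t hst => ?_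
  have h0 := congrFun hst ![false, false, false, false]
  have h1 := congrFun hst ![false, false, false, true]
  simp only [Pi.add_apply, Pi.smul_apply, smul_eq_mul, Pi.zero_apply,
    cluster4_apply_false_false_false, cluster4_0101_apply_false_false_false] at h0 h1
  norm_num at h0 h1
  exact ⟨by linear_combination (2 : ℂ) * h0 + 2 * h1, by linear_combination (2 : ℂ) * h0 - 2 * h1⟩

/-- The eigenspace of `B₂^φ` for its algebraically maximal eigenvalue `4`
is exactly the two-dimensional span of `|φ_0000⟩` and `|φ_0101⟩`; in particular every
superposition `α|φ_0000⟩ + β|φ_0101⟩` attains `⟨B₂^φ⟩ = 4`. -/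
theorem stmt8 :
    Module.End.eigenspace (Matrix.mulVecLin bellB2) (4 : ℂ)
      = Submodule.span ℂ ({cluster4, cluster4_0101} : Set ((Fin 4 → Bool) → ℂ)) ∧
    Module.finrank ℂ
      ↥(Submodule.span ℂ ({cluster4, cluster4_0101} : Set ((Fin 4 → Bool) → ℂ))) = 2 := by
  refine ⟨SetLike.ext fun ψ => ?_, ?_⟩
  · rw [mem_eigenspace_bellB2_iff, mem_span_cluster4_iff]
  · rw [← range_cons_cons_empty cluster4 cluster4_0101 ![],
      finrank_span_eq_card linearIndependent_cluster4, Fintype.card_fin]
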